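/- Let q ≥ 2, let G be a finite connected (q+1)-regular graph, let m ≥ 1, K ∈ H_m, s₀ ∈ ℝ, and ε₀ = q^{−1/2−is₀}. Then for all integers n ≥ 0 and 0 ≤ k ≤ n: ‖conj(ε₀)^{n−k}·ε₀^{k}·σ^{n−k}ρ^{k}K‖_{H_{m+n}} = ‖K‖_{H_m}; and for all integers 0 ≤ k' ≤ k ≤ n: ⟨conj(ε₀)^{n−k}ε₀^{k}σ^{n−k}ρ^{k}K, conj(ε₀)^{n−k'}ε₀^{k'}σ^{n−k'}ρ^{k'}K⟩_{H_{m+n}} = q^{2is₀(k−k')}·⟨S^{k−k'}K, K⟩_{H_m}. -/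

import Mathlib

open Classical Finset

noncomputable section

def IsNB {V : Type} (G : SimpleGraph V) {k : ℕ} (ω : Fin (k + 1) → V) : Prop :=
  (∀ i j : Fin (k + 1), (j : ℕ) = (i : ℕ) + 1 → G.Adj (ω i) (ω j)) ∧
  (∀ i j : Fin (k + 1), (j : ℕ) = (i : ℕ) + 2 → ω i ≠ ω j)

def nbFinset {V : Type} [Fintype V] (G : SimpleGraph V) (k : ℕ) :
    Finset (Fin (k + 1) → V) :=
  Finset.univ.filter fun ω => IsNB G ω

def RegularOfDegree {V : Type} [Fintype V] (G : SimpleGraph V) (d : ℕ) : Prop :=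
  ∀ x : V, (Finset.univ.filter fun y => G.Adj x y).card = d

/-- The transfer operator `S : H_k → H_k`. -/
def transferOp {V : Type} [Fintype V] (G : SimpleGraph V) (q k : ℕ)
    (K : (Fin (k + 1) → V) → ℂ) : (Fin (k + 1) → V) → ℂ :=
  fun ω => (1 / (q : ℂ)) *
    ∑ y : V, if G.Adj y (ω 0) ∧ y ≠ ω 1
      then K (Fin.cons y fun i : Fin k => ω i.castSucc) else 0

/-- `σ^a ρ^b K` for `K ∈ H_m`: the function on `B_N` (`N = a + m + b`) obtained by evaluating
`K` on the segment `(x_a, …, x_{a+m})` of a path `(x₀, …, x_N)`; the left shift `σ` removes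
initial vertices and the right shift `ρ` removes final ones. -/
def segEval {V : Type} (m N a : ℕ) (h : a + m ≤ N) (K : (Fin (m + 1) → V) → ℂ)
    (ω : Fin (N + 1) → V) : ℂ :=
  K fun i : Fin (m + 1) => ω ⟨a + i.val, by have := i.isLt; omega⟩

/-!
Both identities are counting statements about non-backtracking paths. In a `(q+1)`-regular
graph a non-backtracking path of length `N ≥ 1` extends in exactly `q` ways at either end
(at the right end by reversing the path), so summing a function of the length-`m` window
`(x_a, …, x_{a+m})` over `B_N` gives `q^{N-m}` times its sum over `B_m`. As `|ε₀|² = 1/q`,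
this is the norm identity. In the inner product the two windows, at offsets `l` and `l + d`,
lie in one window of length `m + d`; removing its first vertex turns the sum over the `q`
possible first vertices into `q • S`, so by induction that window contributes `q^d ⟨S^d K, K⟩`,
and `conj(ε₀)² q = q^{2 i s₀}` produces the phase.
-/

open ComplexConjugate

section NonBacktracking

variable {V : Type} (G : SimpleGraph V)

lemma isNB_cons_iff {k : ℕ} (y : V) (τ : Fin (k + 2) → V) :
    IsNB G (Fin.cons y τ : Fin (k + 3) → V) ↔ (G.Adj y (τ 0) ∧ y ≠ τ 1) ∧ IsNB G τ := by
  constructor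
  · rintro ⟨hadj, hnb⟩
    refine ⟨⟨hadj 0 1 rfl, hnb 0 2 rfl⟩, fun i j hij => ?_, fun i j hij => ?_⟩
    · simpa using hadj i.succ j.succ (by simp [hij])
    · simpa using hnb i.succ j.succ (by simp [hij])
  · rintro ⟨⟨hy, hy'⟩, hadj, hnb⟩
    constructor
    · intro i j hij
      cases i using Fin.cases with
      | zero =>
        obtain rfl : j = 1 := Fin.ext hij
        simpa using hy
      | succ i =>
        cases j using Fin.cases with
        | zero => simp at hij
        | succ j => simpa using hadj i j (by simpa using hij)
    · intro i j hij
      cases i using Fin.cases with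
      | zero =>
        obtain rfl : j = Fin.succ 1 :=
          Fin.ext (by simp only [hij, Fin.val_succ, Fin.val_one, Fin.val_zero])
        rwa [Fin.cons_zero, Fin.cons_succ]
      | succ i =>
        cases j using Fin.cases with
        | zero => simp at hij
        | succ j => simpa using hnb i j (by simpa using hij)

lemma isNB_comp_rev_iff {k : ℕ} (ω : Fin (k + 1) → V) : IsNB G (ω ∘ Fin.rev) ↔ IsNB G ω := by
  suffices ∀ ω : Fin (k + 1) → V, IsNB G ω → IsNB G (ω ∘ Fin.rev) from
    ⟨fun h => by simpa [Function.comp_def] using this _ h, this ω⟩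
  rintro ω ⟨hadj, hnb⟩
  refine ⟨fun i j hij => (hadj j.rev i.rev ?_).symm, fun i j hij => (hnb j.rev i.rev ?_).symm⟩
  all_goals simp only [Fin.val_rev]; omega

end NonBacktracking

section Window

variable {V : Type}

def window (m : ℕ) {N : ℕ} (a : ℕ) (h : a + m ≤ N) (ω : Fin (N + 1) → V) : Fin (m + 1) → V :=
  fun i => ω ⟨a + i, by omega⟩

lemma window_tail {m N a : ℕ} (h : a + m ≤ N) (ω : Fin (N + 2) → V) :
    window m a h (Fin.tail ω) = window m (a + 1) (by omega) ω := by
  ext i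
  simp only [window, Fin.tail, Fin.succ_mk]
  congr 2
  omega

lemma window_init {m N a : ℕ} (h : a + m ≤ N) (ω : Fin (N + 2) → V) :
    window m a h (Fin.init ω) = window m a (by omega) ω :=
  rfl

lemma window_self {m : ℕ} (ω : Fin (m + 1) → V) : window m 0 (by omega) ω = ω := by
  ext i
  simp [window]

lemma window_window {m n N a b : ℕ} (h : a + n ≤ N) (h' : b + m ≤ n) (ω : Fin (N + 1) → V) :
    window m b h' (window n a h ω) = window m (a + b) (by omega) ω := by
  ext i
  simp only [window]
  congr 2
  omega

lemma segEval_eq_window {m N a : ℕ} (h : a + m ≤ N) (K : (Fin (m + 1) → V) → ℂ)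
    (ω : Fin (N + 1) → V) : segEval m N a h K ω = K (window m a h ω) :=
  rfl

lemma window_zero_cons {m N : ℕ} (h : 0 + m ≤ N) (y : V) (τ : Fin (N + 1) → V) :
    window m 0 (by omega) (Fin.cons y τ : Fin (N + 2) → V)
      = Fin.cons y (Fin.init (window m 0 h τ)) := by
  ext i
  cases i using Fin.cases with
  | zero => rfl
  | succ i => rfl

end Window

section Counting

variable {V : Type} [Fintype V] (G : SimpleGraph V)

def backExtensions {k : ℕ} (τ : Fin (k + 1) → V) : Finset V :=
  univ.filter fun y => G.Adj y (τ 0) ∧ y ≠ τ 1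

lemma card_backExtensions {q k : ℕ} (hreg : RegularOfDegree G (q + 1)) {τ : Fin (k + 2) → V}
    (hτ : IsNB G τ) : #(backExtensions G τ) = q := by
  have hadj : G.Adj (τ 0) (τ 1) := hτ.1 0 1 (by simp)
  have : backExtensions G τ = (univ.filter fun y => G.Adj (τ 0) y).erase (τ 1) := by
    ext y
    simp [backExtensions, G.adj_comm, and_comm]
  rw [this, card_erase_of_mem (by simpa using hadj), hreg]
  rfl

lemma sum_nbFinset_succ {β : Type} [AddCommMonoid β] {N : ℕ} (hN : 1 ≤ N)
    (F : (Fin (N + 2) → V) → β) :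
    ∑ ω ∈ nbFinset G (N + 1), F ω
      = ∑ τ ∈ nbFinset G N, ∑ y ∈ backExtensions G τ, F (Fin.cons y τ) := by
  obtain ⟨k, rfl⟩ := Nat.exists_eq_add_of_le' hN
  rw [nbFinset, sum_filter, ← (Fin.consEquiv fun _ => V).sum_comp, Fintype.sum_prod_type,
    sum_comm, nbFinset, sum_filter]
  refine sum_congr rfl fun τ _ => ?_
  by_cases hτ : IsNB G τ <;> simp [Fin.consEquiv, hτ, isNB_cons_iff, backExtensions, sum_filter]

variable {G} {q : ℕ} {β : Type} [AddCommMonoid β]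

lemma sum_nbFinset_comp_rev {k : ℕ} (F : (Fin (k + 1) → V) → β) :
    ∑ ω ∈ nbFinset G k, F (ω ∘ Fin.rev) = ∑ ω ∈ nbFinset G k, F ω := by
  refine sum_nbij' (· ∘ Fin.rev) (· ∘ Fin.rev) ?_ ?_ ?_ ?_ fun _ _ => rfl
  all_goals simp [nbFinset, isNB_comp_rev_iff, Function.comp_assoc, Fin.rev_involutive.comp_self]

lemma sum_nbFinset_tail (hreg : RegularOfDegree G (q + 1)) {N : ℕ} (hN : 1 ≤ N)
    (f : (Fin (N + 1) → V) → β) :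
    ∑ ω ∈ nbFinset G (N + 1), f (Fin.tail ω) = q • ∑ τ ∈ nbFinset G N, f τ := by
  obtain ⟨k, rfl⟩ := Nat.exists_eq_add_of_le' hN
  rw [sum_nbFinset_succ G hN, smul_sum]
  refine sum_congr rfl fun τ hτ => ?_
  simp only [Fin.tail_cons, sum_const, card_backExtensions G hreg (mem_filter.1 hτ).2]

lemma sum_nbFinset_init (hreg : RegularOfDegree G (q + 1)) {N : ℕ} (hN : 1 ≤ N)
    (f : (Fin (N + 1) → V) → β) :
    ∑ ω ∈ nbFinset G (N + 1), f (Fin.init ω) = q • ∑ τ ∈ nbFinset G N, f τ := by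
  have hinit (ω : Fin (N + 2) → V) : Fin.init (ω ∘ Fin.rev) = Fin.tail ω ∘ Fin.rev := by
    ext i
    simp [Fin.init, Fin.tail, Fin.rev_castSucc]
  rw [← sum_nbFinset_comp_rev, sum_congr rfl fun ω _ => congrArg f (hinit ω),
    sum_nbFinset_tail hreg hN (fun τ => f (τ ∘ Fin.rev)), sum_nbFinset_comp_rev]

lemma sum_nbFinset_window (hreg : RegularOfDegree G (q + 1)) {m : ℕ} (hm : 1 ≤ m)
    (f : (Fin (m + 1) → V) → β) {N a : ℕ} (h : a + m ≤ N) :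
    ∑ ω ∈ nbFinset G N, f (window m a h ω) = q ^ (N - m) • ∑ τ ∈ nbFinset G m, f τ := by
  induction N generalizing a with
  | zero => omega
  | succ N ih =>
    rcases a with _ | a
    · rcases (show m ≤ N ∨ m = N + 1 by omega) with hmN | rfl
      · rw [show N + 1 - m = N - m + 1 by omega, pow_succ', mul_smul, ← ih (a := 0) (by omega),
          ← sum_nbFinset_init hreg (by omega)]
        simp only [window_init]
      · simp only [window_self, Nat.sub_self, pow_zero, one_smul]
    · rw [show N + 1 - m = N - m + 1 by omega, pow_succ', mul_smul, ← ih (a := a) (by omega),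
        ← sum_nbFinset_tail hreg (by omega)]
      simp only [window_tail]

end Counting

section Transfer

variable {V : Type} [Fintype V] {G : SimpleGraph V} {q m : ℕ}

lemma natCast_mul_transferOp (hq : q ≠ 0) {k : ℕ} (K : (Fin (k + 1) → V) → ℂ)
    (τ : Fin (k + 1) → V) :
    (q : ℂ) * transferOp G q k K τ = ∑ y ∈ backExtensions G τ, K (Fin.cons y (Fin.init τ)) := by
  rw [transferOp, backExtensions, sum_filter, ← mul_assoc,
    mul_one_div_cancel (by exact_mod_cast hq), one_mul]
  rfl

lemma backExtensions_window_zero (hm : 1 ≤ m) {N : ℕ} (h : 0 + m ≤ N) (τ : Fin (N + 1) → V) :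
    backExtensions G (window m 0 h τ) = backExtensions G τ := by
  obtain ⟨m, rfl⟩ := Nat.exists_eq_add_of_le' hm
  obtain ⟨N, rfl⟩ := Nat.exists_eq_add_of_le' (show 1 ≤ N by omega)
  rfl

lemma sum_nbFinset_conj_window_zero_mul_window (hq : q ≠ 0) (hm : 1 ≤ m)
    (K₁ K₂ : (Fin (m + 1) → V) → ℂ) (d : ℕ) :
    ∑ ω ∈ nbFinset G (m + d), conj (K₁ (window m 0 (by omega) ω)) * K₂ (window m d (by omega) ω)
      = (q : ℂ) ^ d * ∑ τ ∈ nbFinset G m, conj ((transferOp G q m)^[d] K₁ τ) * K₂ τ := by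
  induction d generalizing K₁ with
  | zero =>
    simp only [window_self, pow_zero, one_mul, Function.iterate_zero_apply]
    rfl
  | succ d ih =>
    have hstep (τ : Fin (m + d + 1) → V) :
        ∑ y ∈ backExtensions G τ, conj (K₁ (window m 0 (by omega) (Fin.cons y τ)))
            * K₂ (window m (d + 1) (by omega) (Fin.cons y τ))
          = q * (conj (transferOp G q m K₁ (window m 0 (by omega) τ))
            * K₂ (window m d (by omega) τ)) := by
      have h0 : 0 + m ≤ m + d := by omega
      have hd : d + m ≤ m + d := by omega
      simp only [window_zero_cons h0, ← window_tail hd, Fin.tail_cons]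
      rw [← backExtensions_window_zero hm h0 τ, ← sum_mul, ← map_sum, ← natCast_mul_transferOp hq,
        map_mul, Complex.conj_natCast, mul_assoc]
    refine (sum_nbFinset_succ G (N := m + d) (by omega) _).trans ?_
    rw [sum_congr rfl fun τ _ => hstep τ, ← mul_sum, ih, Function.iterate_succ_apply, pow_succ',
      mul_assoc]

lemma sum_nbFinset_conj_window_mul_window (hreg : RegularOfDegree G (q + 1)) (hq : q ≠ 0)
    (hm : 1 ≤ m) (K₁ K₂ : (Fin (m + 1) → V) → ℂ) {N l d : ℕ} (h : l + d + m ≤ N) :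
    ∑ ω ∈ nbFinset G N, conj (K₁ (window m l (by omega) ω)) * K₂ (window m (l + d) h ω)
      = (q : ℂ) ^ (N - m) * ∑ τ ∈ nbFinset G m, conj ((transferOp G q m)^[d] K₁ τ) * K₂ τ := by
  have hsum := sum_nbFinset_window hreg (m := m + d) (by omega)
    (fun τ => conj (K₁ (window m 0 (by omega) τ)) * K₂ (window m d (by omega) τ))
    (a := l) (N := N) (by omega)
  simp only [window_window] at hsum
  refine hsum.trans ?_
  rw [sum_nbFinset_conj_window_zero_mul_window hq hm, nsmul_eq_mul, ← mul_assoc, Nat.cast_pow,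
    ← pow_add]
  congr 2
  omega

end Transfer

section Twist

variable {q : ℕ}

lemma conj_natCast_cpow (z : ℂ) : conj ((q : ℂ) ^ z) = (q : ℂ) ^ conj z := by
  have := Complex.cpow_conj (q : ℂ) z (by rw [Complex.natCast_arg]; exact Real.pi_ne_zero.symm)
  rwa [Complex.conj_natCast, eq_comm] at this

lemma norm_natCast_cpow_sq (hq : 0 < q) (s : ℝ) :
    ‖(q : ℂ) ^ (-(1/2 : ℂ) - Complex.I * s)‖ ^ 2 = (q : ℝ)⁻¹ := by
  rw [Complex.norm_natCast_cpow_of_pos hq, ← Real.rpow_natCast, ← Real.rpow_mul q.cast_nonneg]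
  norm_num [Real.rpow_neg_one]

lemma norm_conj_pow_mul_pow_sq (hq : 0 < q) (s : ℝ) (a b : ℕ) :
    ‖conj ((q : ℂ) ^ (-(1/2 : ℂ) - Complex.I * s)) ^ a
        * ((q : ℂ) ^ (-(1/2 : ℂ) - Complex.I * s)) ^ b‖ ^ 2 * q ^ (a + b) = 1 := by
  rw [norm_mul, norm_pow, norm_pow, Complex.norm_conj, ← pow_add, ← pow_mul, mul_comm _ 2, pow_mul,
    norm_natCast_cpow_sq hq, ← mul_pow, inv_mul_cancel₀ (by positivity), one_pow]

lemma conj_pow_mul_pow_conj_mul (hq : q ≠ 0) (s : ℝ) (l k d : ℕ) :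
    conj (conj ((q : ℂ) ^ (-(1/2 : ℂ) - Complex.I * s)) ^ l
        * ((q : ℂ) ^ (-(1/2 : ℂ) - Complex.I * s)) ^ (k + d))
      * (conj ((q : ℂ) ^ (-(1/2 : ℂ) - Complex.I * s)) ^ (l + d)
        * ((q : ℂ) ^ (-(1/2 : ℂ) - Complex.I * s)) ^ k)
      * q ^ (l + k + d) = (q : ℂ) ^ (2 * Complex.I * s * d) := by
  set ε := (q : ℂ) ^ (-(1/2 : ℂ) - Complex.I * s)
  have hq' : (q : ℂ) ≠ 0 := Nat.cast_ne_zero.2 hq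
  have hnorm : ε * conj ε * q = 1 := by
    rw [Complex.mul_conj', ← Complex.ofReal_pow, norm_natCast_cpow_sq (Nat.pos_of_ne_zero hq),
      Complex.ofReal_inv, Complex.ofReal_natCast, inv_mul_cancel₀ hq']
  have hsq : conj ε ^ 2 * q = (q : ℂ) ^ (2 * Complex.I * s) := by
    calc conj ε ^ 2 * q
        = (q : ℂ) ^ ((2 : ℕ) * conj (-(1/2 : ℂ) - Complex.I * s)) * (q : ℂ) ^ (1 : ℂ) := by
          rw [conj_natCast_cpow, Complex.cpow_nat_mul, Complex.cpow_one]
      _ = (q : ℂ) ^ (2 * Complex.I * s) := by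
          rw [← Complex.cpow_add _ _ hq']
          congr 1
          simp [Complex.ext_iff]
  calc _ = (ε * conj ε * q) ^ (l + k) * (conj ε ^ 2 * q) ^ d := by
        simp only [map_mul, map_pow, Complex.conj_conj]
        ring
    _ = (q : ℂ) ^ (2 * Complex.I * s * d) := by
        rw [hnorm, hsq, one_pow, one_mul, Complex.cpow_mul_nat]

end Twist

/-- In the second identity `k = k' + d` and `n = l + k' + d`, so that `σ^{n-k} ρ^k = σ^l ρ^{k'+d}`
and `σ^{n-k'} ρ^{k'} = σ^{l+d} ρ^{k'}`. -/
theorem twisted_shift_identities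
    (q m : ℕ) (hq : 2 ≤ q) (hm : 1 ≤ m)
    (V : Type) [Fintype V] (G : SimpleGraph V)
    (hreg : RegularOfDegree G (q + 1))
    (K : (Fin (m + 1) → V) → ℂ) (s₀ : ℝ) :
    (∀ l k : ℕ,
      (1 / (Fintype.card V : ℝ)) * ∑ ω ∈ nbFinset G (m + l + k),
          ‖(starRingEnd ℂ) ((q : ℂ) ^ (-(1/2 : ℂ) - Complex.I * (s₀ : ℂ))) ^ l *
            ((q : ℂ) ^ (-(1/2 : ℂ) - Complex.I * (s₀ : ℂ))) ^ k *
            segEval m (m + l + k) l (by omega) K ω‖ ^ 2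
        = (1 / (Fintype.card V : ℝ)) * ∑ ω ∈ nbFinset G m, ‖K ω‖ ^ 2) ∧
    (∀ l k' d : ℕ,
      (1 / (Fintype.card V : ℂ)) * ∑ ω ∈ nbFinset G (m + l + k' + d),
          (starRingEnd ℂ)
              ((starRingEnd ℂ) ((q : ℂ) ^ (-(1/2 : ℂ) - Complex.I * (s₀ : ℂ))) ^ l *
               ((q : ℂ) ^ (-(1/2 : ℂ) - Complex.I * (s₀ : ℂ))) ^ (k' + d) *
               segEval m (m + l + k' + d) l (by omega) K ω) *
            ((starRingEnd ℂ) ((q : ℂ) ^ (-(1/2 : ℂ) - Complex.I * (s₀ : ℂ))) ^ (l + d) *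
             ((q : ℂ) ^ (-(1/2 : ℂ) - Complex.I * (s₀ : ℂ))) ^ k' *
             segEval m (m + l + k' + d) (l + d) (by omega) K ω)
        = (q : ℂ) ^ (2 * Complex.I * (s₀ : ℂ) * (d : ℂ)) *
            ((1 / (Fintype.card V : ℂ)) * ∑ ω ∈ nbFinset G m,
              (starRingEnd ℂ) ((transferOp G q m)^[d] K ω) * K ω)) := by
  have hq0 : q ≠ 0 := by omega
  refine ⟨fun l k => ?_, fun l k' d => ?_⟩
  · have hnorm (a : ℂ) (τ) : ‖a * K τ‖ ^ 2 = ‖a‖ ^ 2 * ‖K τ‖ ^ 2 := by rw [norm_mul, mul_pow]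
    congr 1
    simp only [segEval_eq_window, hnorm, ← mul_sum]
    rw [sum_nbFinset_window hreg hm (fun τ => ‖K τ‖ ^ 2) (show l + m ≤ m + l + k by omega),
      show m + l + k - m = l + k by omega, nsmul_eq_mul, Nat.cast_pow, ← mul_assoc,
      norm_conj_pow_mul_pow_sq (Nat.pos_of_ne_zero hq0), one_mul]
  · have hinner (a b : ℂ) (τ τ') :
        conj (a * K τ) * (b * K τ') = conj a * b * (conj (K τ) * K τ') := by
      rw [map_mul]
      ring
    simp only [segEval_eq_window, hinner, ← mul_sum]
    rw [sum_nbFinset_conj_window_mul_window hreg hq0 hm K K (by omega),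
      show m + l + k' + d - m = l + k' + d by omega,
      ← conj_pow_mul_pow_conj_mul hq0 s₀ l k' d]
    ring

end
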